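/- Let n ≥ 1 and let K ⊆ ℝⁿ be the n-dimensional simplex. Then: (i) for every u ∈ K and every ε > 0, g_ε(u) = 0; and (ii) for every v ∉ K, ‖g_ε(v)‖ → ∞ as ε → 0⁺ (Euclidean norm). -/

import Mathlib

/-! As `ε → 0⁺`, `fe' ε z` stays `0` when `z ≤ 0` and grows like `2 z / ε` when `z > 0`.
On the simplex both arguments of `fe'` in `ge` are `≤ 0`. Off it, either `∑ v > 1`, so some
`v i > 0` and the `i`-th coordinate of `ge ε v` is `fe' ε (∑ v - 1) → ∞`, or `∑ v ≤ 1` and some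
`v i < 0`, and that coordinate is `-fe' ε (-v i) → -∞`. -/

noncomputable def fe (ε z : ℝ) : ℝ := if z ≤ ε then 0 else ε⁻¹ * (z - ε) ^ 2

noncomputable def fe' (ε z : ℝ) : ℝ := if z ≤ ε then 0 else 2 * ε⁻¹ * (z - ε)

noncomputable def Fe (n : ℕ) (ε : ℝ) (u : EuclideanSpace ℝ (Fin n)) : ℝ :=
  fe ε (∑ i, u i - 1) + ∑ i, fe ε (-(u i))

noncomputable def ge (n : ℕ) (ε : ℝ) (u : EuclideanSpace ℝ (Fin n)) :
    EuclideanSpace ℝ (Fin n) :=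
  WithLp.toLp 2 (fun i => fe' ε (∑ j, u j - 1) - fe' ε (-(u i)))

def simplexK (n : ℕ) : Set (EuclideanSpace ℝ (Fin n)) :=
  {p | (∀ i, 0 ≤ p i) ∧ ∑ i, p i ≤ 1}

open Filter Topology

lemma fe'_of_le {ε z : ℝ} (h : z ≤ ε) : fe' ε z = 0 := if_pos h

lemma fe'_of_lt {ε z : ℝ} (hε : 0 < ε) (h : ε < z) : fe' ε z = 2 * z * ε⁻¹ - 2 := by
  rw [fe', if_neg h.not_ge]
  field_simp

lemma tendsto_fe'_atTop {z : ℝ} (hz : 0 < z) :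
    Tendsto (fun ε => fe' ε z) (𝓝[>] 0) atTop := by
  have hinv : Tendsto (fun ε : ℝ => 2 * z * ε⁻¹ - 2) (𝓝[>] 0) atTop :=
    tendsto_atTop_add_const_right _ _ (tendsto_inv_nhdsGT_zero.const_mul_atTop (by positivity))
  refine hinv.congr' ?_
  filter_upwards [Ioo_mem_nhdsGT hz] with ε hε
  exact (fe'_of_lt hε.1 hε.2).symm

lemma tendsto_norm_atTop_of_tendsto_abs_apply {α ι : Type*} [Fintype ι] {l : Filter α}
    {x : α → EuclideanSpace ℝ ι} (i : ι) (h : Tendsto (fun a => |x a i|) l atTop) :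
    Tendsto (fun a => ‖x a‖) l atTop :=
  tendsto_atTop_mono (fun a => PiLp.norm_apply_le (x a) i) h

lemma ge_apply (n : ℕ) (ε : ℝ) (v : EuclideanSpace ℝ (Fin n)) (i : Fin n) :
    ge n ε v i = fe' ε (∑ j, v j - 1) - fe' ε (-v i) := rfl

lemma ge_eq_zero_of_mem_simplexK {n : ℕ} {u : EuclideanSpace ℝ (Fin n)} (hu : u ∈ simplexK n)
    {ε : ℝ} (hε : 0 ≤ ε) : ge n ε u = 0 := by
  ext i
  rw [ge_apply, fe'_of_le (by linarith [hu.2]), fe'_of_le (by linarith [hu.1 i]), sub_zero]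
  rfl

lemma exists_abs_ge_apply_tendsto_atTop {n : ℕ} {v : EuclideanSpace ℝ (Fin n)}
    (hv : v ∉ simplexK n) : ∃ i, Tendsto (fun ε => |ge n ε v i|) (𝓝[>] 0) atTop := by
  by_cases hs : 0 < ∑ j, v j - 1
  · obtain ⟨i, -, hi⟩ : ∃ i ∈ Finset.univ, (0 : ℝ) < v i :=
      Finset.exists_lt_of_sum_lt (by rw [Finset.sum_const_zero]; linarith)
    refine ⟨i, tendsto_abs_atTop_atTop.comp ((tendsto_fe'_atTop hs).congr' ?_)⟩
    filter_upwards [self_mem_nhdsWithin] with ε (hε : 0 < ε)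
    rw [ge_apply, fe'_of_le (by linarith : -v i ≤ ε), sub_zero]
  · obtain ⟨i, hi⟩ : ∃ i, v i < 0 := by
      by_contra! hnonneg
      exact hv ⟨hnonneg, by linarith⟩
    have hneg : Tendsto (fun ε => -fe' ε (-v i)) (𝓝[>] 0) atBot :=
      tendsto_neg_atTop_atBot.comp (tendsto_fe'_atTop (neg_pos.mpr hi))
    refine ⟨i, tendsto_abs_atBot_atTop.comp (hneg.congr' ?_)⟩
    filter_upwards [self_mem_nhdsWithin] with ε (hε : 0 < ε)
    rw [ge_apply, fe'_of_le (by linarith : ∑ j, v j - 1 ≤ ε), zero_sub]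

theorem stmt_7_general (n : ℕ) :
    (∀ u ∈ simplexK n, ∀ ε : ℝ, 0 < ε → ge n ε u = 0) ∧
      ∀ v : EuclideanSpace ℝ (Fin n), v ∉ simplexK n →
        Filter.Tendsto (fun ε => ‖ge n ε v‖) (nhdsWithin 0 (Set.Ioi 0))
          Filter.atTop :=
  ⟨fun _ hu _ hε => ge_eq_zero_of_mem_simplexK hu hε.le, fun _ hv =>
    let ⟨i, hi⟩ := exists_abs_ge_apply_tendsto_atTop hv
    tendsto_norm_atTop_of_tendsto_abs_apply i hi⟩

theorem stmt_7 (n : ℕ) (hn : 1 ≤ n) :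
    (∀ u ∈ simplexK n, ∀ ε : ℝ, 0 < ε → ge n ε u = 0) ∧
      ∀ v : EuclideanSpace ℝ (Fin n), v ∉ simplexK n →
        Filter.Tendsto (fun ε => ‖ge n ε v‖) (nhdsWithin 0 (Set.Ioi 0))
          Filter.atTop :=
  stmt_7_general n
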